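/- Fix a baseline configuration with b − M ≥ 1 and b − N ≥ 1. Then the baseline code C is locally recoverable with locality r: for each point P_{i,j}, and every σ ∈ V[M,N], the value σ(P_{i,j}; t_i) is determined by the r values σ(P_{i,j′}; t_i), j′ ≠ j, at the other points of the same fiber (so two elements of V[M,N] agreeing at those r points agree at P_{i,j}). Moreover, the minimum distance d of C satisfies d ≤ (r+1)(b−(N+1)) − (M−N) − ⌈(M−N)/r⌉ + 2. -/

import Mathlib

/-!
Local recovery: over `t_i`, `σ` restricts to the affine function `x ↦ a₀(t_i) + Σ aℓ(t_i) xℓ`,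
and any `r` of the `r + 1` points of the fiber affinely span `F^{r-1}`, so this affine function,
hence its value at the remaining point, is determined by its other `r` values.

Distance: `dim V[M,N] = K + 1` with `K = M + (r-1)(N+1)`, so some `σ ≠ 0` vanishes at the first
`K` points taken `r` per fiber (skipping the last point of each fiber). By local recovery it also
vanishes at the last point of each of the first `⌊K/r⌋` fibers, giving `K + ⌊K/r⌋` zeros. Its
codeword is nonzero: a codeword vanishing on a whole fiber kills all coefficients at `t_i`, and
they have degree `< b`. Finally `⌈(M-N)/r⌉ = ⌊K/r⌋ - N`.
-/

open Polynomial Matrix Module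

variable {F : Type*} [Field F]

theorem eq_zero_of_add_dotProduct_eq_zero {ι : Type*} [Fintype ι] {n : ℕ} {Q : ι → Fin n → F}
    (hQ : LinearIndependent F fun i => ((1 : F), Q i)) (hcard : Fintype.card ι = n + 1)
    {c₀ : F} {c : Fin n → F} (h : ∀ i, c₀ + c ⬝ᵥ Q i = 0) : c₀ = 0 ∧ c = 0 := by
  have : Nonempty ι := Fintype.card_pos_iff.mp (by omega)
  let B := basisOfLinearIndependentOfCardEqFinrank hQ (by simp [hcard, add_comm])
  let φ : F × (Fin n → F) →ₗ[F] F := (LinearMap.mulLeft F c₀).coprod (dotProductEquiv F _ c)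
  have hφ (v : F × (Fin n → F)) : φ v = c₀ * v.1 + c ⬝ᵥ v.2 := by simp [φ]
  have hφ0 : φ = 0 := B.ext fun i => by simpa [B, hφ] using h i
  refine ⟨by simpa [hφ] using LinearMap.congr_fun hφ0 (1, 0), funext fun ℓ => ?_⟩
  simpa [hφ] using LinearMap.congr_fun hφ0 (0, Pi.single ℓ 1)

section Fiber

variable {r : ℕ} {Q : Fin (r + 1) → Fin (r - 1) → F} {j : Fin (r + 1)}

theorem eq_zero_of_forall_ne_add_dotProduct_eq_zero (hr : 1 ≤ r)
    (hQ : LinearIndependent F fun j' : {j' // j' ≠ j} => ((1 : F), Q j')) {c₀ : F}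
    {c : Fin (r - 1) → F} (h : ∀ j' ≠ j, c₀ + c ⬝ᵥ Q j' = 0) : c₀ = 0 ∧ c = 0 :=
  eq_zero_of_add_dotProduct_eq_zero hQ (by simp [Fintype.card_subtype_compl]; omega)
    fun j' => h j' j'.2

theorem add_dotProduct_eq_of_forall_ne (hr : 1 ≤ r)
    (hQ : LinearIndependent F fun j' : {j' // j' ≠ j} => ((1 : F), Q j')) {c₀ c₀' : F}
    {c c' : Fin (r - 1) → F} (h : ∀ j' ≠ j, c₀ + c ⬝ᵥ Q j' = c₀' + c' ⬝ᵥ Q j') :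
    c₀ + c ⬝ᵥ Q j = c₀' + c' ⬝ᵥ Q j := by
  obtain ⟨h₀, h₁⟩ := eq_zero_of_forall_ne_add_dotProduct_eq_zero (c₀ := c₀ - c₀') (c := c - c')
    hr hQ fun j' hj' => by rw [sub_dotProduct, ← sub_eq_zero.2 (h j' hj')]; ring
  rw [sub_eq_zero.1 h₀, sub_eq_zero.1 h₁]

end Fiber

theorem finrank_degreeLE (M : ℕ) : finrank F (degreeLE F M) = M + 1 := by
  rw [← degreeLT_succ_eq_degreeLE, (degreeLTEquiv F (M + 1)).finrank_eq, finrank_fin_fun]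

instance (M : ℕ) : FiniteDimensional F (degreeLE F M) :=
  Module.finite_of_finrank_pos (by rw [finrank_degreeLE]; omega)

theorem finrank_degreeLE_prod_pi (M N n : ℕ) :
    finrank F (degreeLE F M × (Fin n → degreeLE F N)) = M + 1 + n * (N + 1) := by
  simp [finrank_pi_fintype, finrank_degreeLE]

theorem eq_zero_of_degree_le_of_eval_eq_zero {b M : ℕ} {t : Fin b → F}
    (ht : Function.Injective t) (hM : M < b) {p : F[X]} (hp : p.degree ≤ M)
    (h : ∀ i, p.eval (t i) = 0) : p = 0 :=
  p.eq_zero_of_natDegree_lt_card_of_eval_eq_zero ht h <| by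
    simpa using (natDegree_le_of_degree_le hp).trans_lt hM

theorem exists_ne_zero_forall_apply_eq_zero {V ι : Type*} [AddCommGroup V] [Module F V]
    [FiniteDimensional F V] (f : V →ₗ[F] ι → F) {K : ℕ} (e : Fin K → ι)
    (hK : K < finrank F V) : ∃ v ≠ 0, ∀ k, f v (e k) = 0 := by
  have := LinearMap.ker_ne_bot_of_finrank_lt (f := LinearMap.funLeft F F e ∘ₗ f)
    (by rwa [finrank_fin_fun])
  obtain ⟨v, hv, hv0⟩ := (Submodule.ne_bot_iff _).1 this
  exact ⟨v, hv0, fun k => congrFun hv k⟩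

theorem hammingNorm_add_card_le {ι κ : Type*} [Fintype ι] [Fintype κ] {β : ι → Type*}
    [∀ i, DecidableEq (β i)] [∀ i, Zero (β i)] {w : ∀ i, β i} {g : κ → ι}
    (hg : Function.Injective g) (hw : ∀ k, w (g k) = 0) :
    hammingNorm w + Fintype.card κ ≤ Fintype.card ι := by
  classical
  have hdisj : Disjoint ({i | w i ≠ 0} : Finset ι) (Finset.univ.map ⟨g, hg⟩) := by
    rw [Finset.disjoint_left]
    intro i hi hig
    obtain ⟨k, -, rfl⟩ := Finset.mem_map.1 hig
    exact (Finset.mem_filter.1 hi).2 (hw k)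
  simpa [hammingNorm, Finset.card_union_of_disjoint hdisj] using
    Finset.card_le_univ (({i | w i ≠ 0} : Finset ι) ∪ Finset.univ.map ⟨g, hg⟩)

theorem ceil_sub_div_eq {r M N : ℕ} (hr : 0 < r) :
    ⌈((M : ℚ) - N) / r⌉ = ((M + (r - 1) * (N + 1)) / r : ℕ) - (N : ℤ) := by
  have hdiv := Nat.div_add_mod (M + (r - 1) * (N + 1)) r
  have hmod := Nat.mod_lt (M + (r - 1) * (N + 1)) hr
  generalize (M + (r - 1) * (N + 1)) / r = q at *
  generalize (M + (r - 1) * (N + 1)) % r = m at *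
  have hdiv' : (r : ℚ) * q + m = M + (r - 1) * (N + 1) := by
    rw [← Nat.cast_one, ← Nat.cast_sub hr]; exact_mod_cast hdiv
  have hmod' : (m : ℚ) + 1 ≤ r := by exact_mod_cast hmod
  have hr' : (0 : ℚ) < r := by exact_mod_cast hr
  rw [Int.ceil_eq_iff]
  push_cast
  constructor
  · rw [lt_div_iff₀ hr']; linarith
  · rw [div_le_iff₀ hr']; linarith

section Baseline

variable {r b M N : ℕ} {t : Fin b → F} {P : Fin b → Fin (r + 1) → Fin (r - 1) → F}

/-- `σ ∈ V[M,N]` is given by its coefficients `(a₀, a)`; entry `(i, j)` is `σ(P i j; t i)`. -/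
def baselineEval (M N : ℕ) (t : Fin b → F) (P : Fin b → Fin (r + 1) → Fin (r - 1) → F) :
    (degreeLE F M × (Fin (r - 1) → degreeLE F N)) →ₗ[F] Fin b × Fin (r + 1) → F where
  toFun v p := eval (t p.1) v.1 + (fun ℓ => eval (t p.1) (v.2 ℓ : F[X])) ⬝ᵥ P p.1 p.2
  map_add' v v' := by
    ext p
    simp only [Prod.fst_add, Prod.snd_add, Pi.add_apply, Submodule.coe_add, eval_add]
    rw [← Pi.add_def, add_dotProduct]
    ring
  map_smul' c v := by
    ext p
    simp only [Prod.smul_fst, Prod.smul_snd, Pi.smul_apply, Submodule.coe_smul, eval_smul,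
      smul_eq_mul, RingHom.id_apply]
    rw [mul_add]
    exact congrArg _ (smul_dotProduct c _ _)

theorem baselineEval_apply (v : degreeLE F M × (Fin (r - 1) → degreeLE F N)) (i : Fin b)
    (j : Fin (r + 1)) :
    baselineEval M N t P v (i, j) =
      eval (t i) v.1 + (fun ℓ => eval (t i) (v.2 ℓ : F[X])) ⬝ᵥ P i j :=
  rfl

theorem eval_eq_zero_of_baselineEval_eq_zero (hr : 1 ≤ r) {i : Fin b} {j : Fin (r + 1)}
    (hP : LinearIndependent F fun j' : {j' : Fin (r + 1) // j' ≠ j} => ((1 : F), P i j'))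
    {v : degreeLE F M × (Fin (r - 1) → degreeLE F N)}
    (hv : ∀ j' ≠ j, baselineEval M N t P v (i, j') = 0) :
    eval (t i) (v.1 : F[X]) = 0 ∧ (fun ℓ => eval (t i) (v.2 ℓ : F[X])) = 0 :=
  eq_zero_of_forall_ne_add_dotProduct_eq_zero hr hP hv

theorem baselineEval_injective (hr : 1 ≤ r) (ht : Function.Injective t) (hM : M < b)
    (hN : N < b)
    (hP : ∀ i j, LinearIndependent F fun j' : {j' : Fin (r + 1) // j' ≠ j} => ((1 : F), P i j')) :
    Function.Injective (baselineEval M N t P) := by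
  refine (injective_iff_map_eq_zero _).2 fun v hv => ?_
  have hfiber (i : Fin b) := eval_eq_zero_of_baselineEval_eq_zero hr (hP i 0)
    fun j' _ => congrFun hv (i, j')
  refine Prod.ext (Subtype.ext ?_) (funext fun ℓ => Subtype.ext ?_)
  · exact eq_zero_of_degree_le_of_eval_eq_zero ht hM (mem_degreeLE.1 v.1.2) fun i => (hfiber i).1
  · exact eq_zero_of_degree_le_of_eval_eq_zero ht hN (mem_degreeLE.1 (v.2 ℓ).2)
      fun i => congrFun (hfiber i).2 ℓ

/-- The first `K` points, in lexicographic order, among the points `(i, j)` with `j ≠ last`. -/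
def firstPoints {K : ℕ} (hK : K ≤ b * r) : Fin K → Fin b × Fin (r + 1) :=
  Prod.map id Fin.castSucc ∘ finProdFinEquiv.symm ∘ Fin.castLE hK

theorem firstPoints_injective {K : ℕ} (hK : K ≤ b * r) : Function.Injective (firstPoints hK) :=
  (Function.injective_id.prodMap (Fin.castSucc_injective _)).comp <|
    finProdFinEquiv.symm.injective.comp (Fin.castLE_injective hK)

theorem baselineEval_last_eq_zero (hr : 1 ≤ r)
    (hP : ∀ i j, LinearIndependent F fun j' : {j' : Fin (r + 1) // j' ≠ j} => ((1 : F), P i j'))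
    {K : ℕ} (hK : K ≤ b * r) {v : degreeLE F M × (Fin (r - 1) → degreeLE F N)}
    (hv : ∀ k, baselineEval M N t P v (firstPoints hK k) = 0) {i : Fin b} (hi : (i : ℕ) < K / r) :
    baselineEval M N t P v (i, Fin.last r) = 0 := by
  have hfiber : ∀ j' ≠ Fin.last r, baselineEval M N t P v (i, j') = 0 := by
    intro j' hj'
    obtain ⟨j, rfl⟩ := Fin.eq_castSucc_of_ne_last hj'
    have hlt : (finProdFinEquiv (i, j) : ℕ) < K := by
      have := Nat.mul_div_le K r
      have := Nat.mul_le_mul_left r (Nat.succ_le_of_lt hi)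
      simp only [finProdFinEquiv_apply_val]
      linarith [j.2]
    have hpt : firstPoints hK ⟨_, hlt⟩ = (i, j.castSucc) := by
      simp only [firstPoints, Function.comp_apply]
      rw [show Fin.castLE hK ⟨_, hlt⟩ = finProdFinEquiv (i, j) from rfl, Equiv.symm_apply_apply]
      rfl
    rw [← hpt, hv]
  obtain ⟨h₀, h₁⟩ := eval_eq_zero_of_baselineEval_eq_zero hr (hP i (Fin.last r)) hfiber
  rw [baselineEval_apply, h₀, h₁, zero_dotProduct, add_zero]

theorem exists_ne_zero_hammingNorm_baselineEval_le [DecidableEq F] (hr : 1 ≤ r)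
    (hP : ∀ i j, LinearIndependent F fun j' : {j' : Fin (r + 1) // j' ≠ j} => ((1 : F), P i j'))
    {K : ℕ} (hKb : K ≤ b * r) (hKV : K ≤ M + (r - 1) * (N + 1)) :
    ∃ v ≠ 0, hammingNorm (baselineEval M N t P v) + (K + K / r) ≤ b * (r + 1) := by
  obtain ⟨v, hv0, hv⟩ := exists_ne_zero_forall_apply_eq_zero (baselineEval M N t P)
    (firstPoints hKb) (by rw [finrank_degreeLE_prod_pi]; omega)
  have hq : K / r ≤ b := Nat.div_le_of_le_mul (by rwa [mul_comm])
  let lastPoints (i : Fin (K / r)) : Fin b × Fin (r + 1) := (Fin.castLE hq i, Fin.last r)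
  have hinj : Function.Injective (Sum.elim (firstPoints hKb) lastPoints) :=
    (firstPoints_injective hKb).sumElim
      (fun i i' h => Fin.castLE_injective hq (congrArg Prod.fst h))
      fun k i h => Fin.castSucc_ne_last _ (congrArg Prod.snd h)
  refine ⟨v, hv0, ?_⟩
  simpa using hammingNorm_add_card_le hinj
    (Sum.forall.2 ⟨hv, fun i => baselineEval_last_eq_zero hr hP hKb hv i.2⟩)

end Baseline

theorem stmt_7_general (F : Type) [Field F] [DecidableEq F]
    (r b M N : ℕ) (hr : 2 ≤ r)
    (hM : M + 1 ≤ b) (hN : N + 1 ≤ b)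
    (t : Fin b → F) (ht : Function.Injective t)
    (P : Fin b → Fin (r + 1) → (Fin (r - 1) → F))
    -- no r of the r+1 points in each fiber lie on an affine hyperplane
    (hP : ∀ (i : Fin b) (j : Fin (r + 1)), LinearIndependent F
      (fun j' : {j' : Fin (r + 1) // j' ≠ j} =>
        (((1 : F), P i j') : F × (Fin (r - 1) → F)))) :
    -- local recoverability with locality r
    (∀ (i : Fin b) (j : Fin (r + 1)) (a₀ a₀' : Polynomial F)
        (a a' : Fin (r - 1) → Polynomial F),
      a₀.degree ≤ (M : ℕ) → a₀'.degree ≤ (M : ℕ) →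
      (∀ ℓ, (a ℓ).degree ≤ (N : ℕ)) → (∀ ℓ, (a' ℓ).degree ≤ (N : ℕ)) →
      (∀ j' : Fin (r + 1), j' ≠ j →
        a₀.eval (t i) + ∑ ℓ : Fin (r - 1), (a ℓ).eval (t i) * P i j' ℓ
          = a₀'.eval (t i) + ∑ ℓ : Fin (r - 1), (a' ℓ).eval (t i) * P i j' ℓ) →
      a₀.eval (t i) + ∑ ℓ : Fin (r - 1), (a ℓ).eval (t i) * P i j ℓ
        = a₀'.eval (t i) + ∑ ℓ : Fin (r - 1), (a' ℓ).eval (t i) * P i j ℓ) ∧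
    -- Singleton-type upper bound on the minimum distance
    (∃ w, w ∈ Submodule.span F
      {w : Fin b × Fin (r + 1) → F |
        ∃ (a₀ : Polynomial F) (a : Fin (r - 1) → Polynomial F),
          a₀.degree ≤ (M : ℕ) ∧ (∀ ℓ, (a ℓ).degree ≤ (N : ℕ)) ∧
          w = fun p => a₀.eval (t p.1)
            + ∑ ℓ : Fin (r - 1), (a ℓ).eval (t p.1) * P p.1 p.2 ℓ} ∧
      w ≠ 0 ∧
      (hammingNorm w : ℤ) ≤ ((r : ℤ) + 1) * ((b : ℤ) - ((N : ℤ) + 1))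
        - ((M : ℤ) - (N : ℤ)) - ⌈((M : ℚ) - (N : ℚ)) / (r : ℚ)⌉ + 2) := by
  have hr1 : 1 ≤ r := by omega
  refine ⟨fun i j a₀ a₀' a a' _ _ _ _ h => add_dotProduct_eq_of_forall_ne hr1 (hP i j) h, ?_⟩
  have hKb : M + (r - 1) * (N + 1) ≤ b * r := by
    nlinarith [Nat.sub_add_cancel hr1, Nat.mul_le_mul_left (r - 1) hN]
  obtain ⟨v, hv0, hw⟩ := exists_ne_zero_hammingNorm_baselineEval_le (t := t) hr1 hP hKb le_rfl
  refine ⟨baselineEval M N t P v, Submodule.subset_span ⟨v.1, fun ℓ => v.2 ℓ,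
    mem_degreeLE.1 v.1.2, fun ℓ => mem_degreeLE.1 (v.2 ℓ).2, rfl⟩,
    (map_ne_zero_iff _ (baselineEval_injective hr1 ht hM hN hP)).2 hv0, ?_⟩
  rw [ceil_sub_div_eq (by omega)]
  generalize (M + (r - 1) * (N + 1)) / r = q at hw ⊢
  zify [hr1] at hw
  linarith

/-- a baseline code with `b - M ≥ 1`, `b - N ≥ 1` is locally recoverable
with locality `r` (the value of any `σ ∈ V[M,N]` at a point of a fiber is determined by
its values at the other `r` points of the fiber), and its minimum distance satisfies
`d ≤ (r+1)(b-(N+1)) - (M-N) - ⌈(M-N)/r⌉ + 2`. -/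
theorem stmt_7 (F : Type) [Field F] [Fintype F] [DecidableEq F]
    (r b M N : ℕ) (hr : 2 ≤ r) (hb : 1 ≤ b)
    (hM : M + 1 ≤ b) (hN : N + 1 ≤ b)
    (t : Fin b → F) (ht : Function.Injective t)
    (P : Fin b → Fin (r + 1) → (Fin (r - 1) → F))
    -- no r of the r+1 points in each fiber lie on an affine hyperplane
    (hP : ∀ (i : Fin b) (j : Fin (r + 1)), LinearIndependent F
      (fun j' : {j' : Fin (r + 1) // j' ≠ j} =>
        (((1 : F), P i j') : F × (Fin (r - 1) → F)))) :
    -- local recoverability with locality r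
    (∀ (i : Fin b) (j : Fin (r + 1)) (a₀ a₀' : Polynomial F)
        (a a' : Fin (r - 1) → Polynomial F),
      a₀.degree ≤ (M : ℕ) → a₀'.degree ≤ (M : ℕ) →
      (∀ ℓ, (a ℓ).degree ≤ (N : ℕ)) → (∀ ℓ, (a' ℓ).degree ≤ (N : ℕ)) →
      (∀ j' : Fin (r + 1), j' ≠ j →
        a₀.eval (t i) + ∑ ℓ : Fin (r - 1), (a ℓ).eval (t i) * P i j' ℓ
          = a₀'.eval (t i) + ∑ ℓ : Fin (r - 1), (a' ℓ).eval (t i) * P i j' ℓ) →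
      a₀.eval (t i) + ∑ ℓ : Fin (r - 1), (a ℓ).eval (t i) * P i j ℓ
        = a₀'.eval (t i) + ∑ ℓ : Fin (r - 1), (a' ℓ).eval (t i) * P i j ℓ) ∧
    -- Singleton-type upper bound on the minimum distance
    (∃ w, w ∈ Submodule.span F
      {w : Fin b × Fin (r + 1) → F |
        ∃ (a₀ : Polynomial F) (a : Fin (r - 1) → Polynomial F),
          a₀.degree ≤ (M : ℕ) ∧ (∀ ℓ, (a ℓ).degree ≤ (N : ℕ)) ∧
          w = fun p => a₀.eval (t p.1)
            + ∑ ℓ : Fin (r - 1), (a ℓ).eval (t p.1) * P p.1 p.2 ℓ} ∧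
      w ≠ 0 ∧
      (hammingNorm w : ℤ) ≤ ((r : ℤ) + 1) * ((b : ℤ) - ((N : ℤ) + 1))
        - ((M : ℤ) - (N : ℤ)) - ⌈((M : ℚ) - (N : ℚ)) / (r : ℚ)⌉ + 2) :=
  stmt_7_general F r b M N hr hM hN t ht P hP
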